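/- Laplace-type bound: for a, ξ > 0, ∫_0^∞ e^{−t⁴/2 − aξ/(2t)} dt ≤ √(2π) · e^{−(5/2)(aξ/4)^{4/5}} / √(φ''(t₀)), where t₀ = (aξ/4)^{1/5} and φ(t) = t⁴/2 + aξ/(2t). In particular ∫_0^∞ e^{−t⁴/2 − aξ/(2t)} dt ≤ C e^{−c ξ^{4/5}} for constants c, C > 0 depending only on a. -/

import Mathlib

/-!
With `t₀ = (aξ/4)^{1/5}` we have `aξ = 4t₀⁵`, and the phase `φ(t) = t⁴/2 + 2t₀⁵/t` satisfies
`φ(t) - φ(t₀) - φ''(t₀)(t - t₀)²/2 = (t - t₀)⁴(t + 4t₀)/(2t) ≥ 0` for `t > 0`, with `φ(t₀) = 5t₀⁴/2`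
and `φ''(t₀) = 10t₀²`. The integrand is therefore dominated by a Gaussian centred at `t₀`, which
gives the Laplace bound. For the uniform bound, `φ(t) ≥ t⁴/4 + φ(t)/2 ≥ t⁴/4 + 5t₀⁴/4` and
`t⁴ ≥ t² - 1/4` dominate the integrand by `e^{1/16 - 5t₀⁴/4} e^{-t²/4}`, and `t₀⁴` is a constant
multiple of `ξ^{4/5}`.
-/

open MeasureTheory Real Set

theorem setIntegral_le_mul_sqrt_of_le_gaussian {f : ℝ → ℝ} {s : Set ℝ} (hs : MeasurableSet s)
    {E p t₀ : ℝ} (hE : 0 ≤ E) (hp : 0 < p) (hf_nonneg : ∀ t ∈ s, 0 ≤ f t)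
    (hf_le : ∀ t ∈ s, f t ≤ E * exp (-p * (t - t₀) ^ 2)) :
    ∫ t in s, f t ≤ E * √(π / p) := by
  have hg : Integrable (fun t => E * exp (-p * (t - t₀) ^ 2)) :=
    ((integrable_exp_neg_mul_sq hp).comp_sub_right t₀).const_mul E
  calc ∫ t in s, f t ≤ ∫ t in s, E * exp (-p * (t - t₀) ^ 2) :=
        integral_mono_of_nonneg (ae_restrict_of_forall_mem hs hf_nonneg) hg.restrict
          (ae_restrict_of_forall_mem hs hf_le)
    _ ≤ ∫ t, E * exp (-p * (t - t₀) ^ 2) :=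
        setIntegral_le_integral hg (Filter.Eventually.of_forall fun t => by positivity)
    _ = E * √(π / p) := by
        rw [integral_const_mul, integral_sub_right_eq_self (fun t => exp (-p * t ^ 2)),
          integral_gaussian]

section QuarticAddInv

variable {u t : ℝ}

theorem quartic_add_inv_ge_quadratic (hu : 0 < u) (ht : 0 < t) :
    5 / 2 * u ^ 4 + 5 * u ^ 2 * (t - u) ^ 2 ≤ t ^ 4 / 2 + 4 * u ^ 5 / (2 * t) := by
  have hgap : t ^ 4 / 2 + 4 * u ^ 5 / (2 * t) - (5 / 2 * u ^ 4 + 5 * u ^ 2 * (t - u) ^ 2)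
      = (t - u) ^ 4 * (t + 4 * u) / (2 * t) := by
    field_simp
    ring
  have : 0 ≤ (t - u) ^ 4 * (t + 4 * u) / (2 * t) := by positivity
  linarith

theorem quartic_add_inv_ge_square (hu : 0 < u) (ht : 0 < t) :
    5 / 4 * u ^ 4 + t ^ 2 / 4 - 1 / 16 ≤ t ^ 4 / 2 + 4 * u ^ 5 / (2 * t) := by
  have hmin : 5 / 2 * u ^ 4 ≤ t ^ 4 / 2 + 4 * u ^ 5 / (2 * t) := by
    have : 0 ≤ 5 * u ^ 2 * (t - u) ^ 2 := by positivity
    linarith [quartic_add_inv_ge_quadratic hu ht]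
  have hsq : t ^ 2 / 4 - 1 / 16 ≤ t ^ 4 / 4 := by nlinarith [sq_nonneg (t ^ 2 - 1 / 2)]
  have : 0 ≤ 4 * u ^ 5 / (2 * t) := by positivity
  linarith

theorem hasDerivAt_quartic_add_inv (c : ℝ) (ht : t ≠ 0) :
    HasDerivAt (fun t : ℝ => t ^ 4 / 2 + c / (2 * t)) (2 * t ^ 3 - c / (2 * t ^ 2)) t := by
  have h := ((hasDerivAt_pow 4 t).div_const 2).add
    ((hasDerivAt_const t c).div ((hasDerivAt_id t).const_mul 2) (by simpa using ht))
  refine h.congr_deriv ?_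
  simp only [id]
  field_simp
  ring

theorem hasDerivAt_deriv_quartic_add_inv (c : ℝ) (ht : t ≠ 0) :
    HasDerivAt (fun t : ℝ => 2 * t ^ 3 - c / (2 * t ^ 2)) (6 * t ^ 2 + c / t ^ 3) t := by
  have h := ((hasDerivAt_pow 3 t).const_mul 2).sub
    ((hasDerivAt_const t c).div ((hasDerivAt_pow 2 t).const_mul 2) (by simpa using ht))
  refine h.congr_deriv ?_
  field_simp
  ring

theorem deriv_deriv_quartic_add_inv (c : ℝ) (ht : t ≠ 0) :
    deriv (deriv (fun t : ℝ => t ^ 4 / 2 + c / (2 * t))) t = 6 * t ^ 2 + c / t ^ 3 := by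
  have hderiv : deriv (fun t : ℝ => t ^ 4 / 2 + c / (2 * t)) =ᶠ[nhds t]
      fun t => 2 * t ^ 3 - c / (2 * t ^ 2) := by
    filter_upwards [isOpen_ne.mem_nhds ht] with s hs
    exact (hasDerivAt_quartic_add_inv c hs).deriv
  rw [hderiv.deriv_eq, (hasDerivAt_deriv_quartic_add_inv c ht).deriv]

theorem integral_exp_neg_quartic_add_inv_le_laplace (hu : 0 < u) :
    ∫ t in Ioi 0, exp (-t ^ 4 / 2 - 4 * u ^ 5 / (2 * t)) ≤
      √(2 * π) * exp (-(5 / 2) * u ^ 4) / √(10 * u ^ 2) := by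
  calc _ ≤ exp (-(5 / 2) * u ^ 4) * √(π / (5 * u ^ 2)) :=
        setIntegral_le_mul_sqrt_of_le_gaussian measurableSet_Ioi (exp_pos _).le (by positivity)
          (t₀ := u) (fun t _ => (exp_pos _).le) fun t ht => by
            rw [← exp_add, exp_le_exp]
            linarith [quartic_add_inv_ge_quadratic hu ht]
    _ = _ := by
      rw [mul_div_right_comm, ← sqrt_div (by positivity),
        show 2 * π / (10 * u ^ 2) = π / (5 * u ^ 2) by field_simp; ring, mul_comm]

theorem integral_exp_neg_quartic_add_inv_le (hu : 0 < u) :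
    ∫ t in Ioi 0, exp (-t ^ 4 / 2 - 4 * u ^ 5 / (2 * t)) ≤
      √(4 * π) * exp (1 / 16) * exp (-(5 / 4) * u ^ 4) := by
  calc _ ≤ exp (1 / 16 - 5 / 4 * u ^ 4) * √(π / (1 / 4)) :=
        setIntegral_le_mul_sqrt_of_le_gaussian measurableSet_Ioi (exp_pos _).le (by norm_num)
          (t₀ := 0) (fun t _ => (exp_pos _).le) fun t ht => by
            rw [← exp_add, exp_le_exp]
            linarith [quartic_add_inv_ge_square hu ht]
    _ = _ := by
      rw [show π / (1 / 4) = 4 * π by ring, sub_eq_add_neg, exp_add]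
      ring_nf

end QuarticAddInv

/-- Laplace-type bound: for `a, ξ > 0`,
`∫_0^∞ e^{-t⁴/2 - aξ/(2t)} dt ≤ √(2π) e^{-(5/2)(aξ/4)^{4/5}} / √(φ''(t₀))`
with `t₀ = (aξ/4)^{1/5}`, `φ(t) = t⁴/2 + aξ/(2t)`; in particular for each `a > 0`
there are `c, C > 0` with `∫_0^∞ e^{-t⁴/2 - aξ/(2t)} dt ≤ C e^{-c ξ^{4/5}}`
for all `ξ > 0`. -/
theorem stmt_16 (a : ℝ) (ha : 0 < a) :
    (∀ ξ : ℝ, 0 < ξ →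
      (∫ t in Set.Ioi (0:ℝ), Real.exp (-t^4/2 - a*ξ/(2*t))) ≤
        Real.sqrt (2 * Real.pi) * Real.exp (-(5/2) * (a*ξ/4) ^ ((4:ℝ)/5)) /
          Real.sqrt (deriv (deriv (fun t : ℝ => t^4/2 + a*ξ/(2*t)))
            ((a*ξ/4) ^ ((1:ℝ)/5)))) ∧
    (∃ c > 0, ∃ C > 0, ∀ ξ : ℝ, 0 < ξ →
      (∫ t in Set.Ioi (0:ℝ), Real.exp (-t^4/2 - a*ξ/(2*t))) ≤
        C * Real.exp (-c * ξ ^ ((4:ℝ)/5))) := by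
  have hroot : ∀ ξ : ℝ, 0 < ξ → ∃ u > 0, (a * ξ / 4) ^ ((1 : ℝ) / 5) = u ∧ a * ξ = 4 * u ^ 5 ∧
      (a * ξ / 4) ^ ((4 : ℝ) / 5) = u ^ 4 := fun ξ hξ => by
    have hb : 0 ≤ a * ξ / 4 := by positivity
    refine ⟨_, by positivity, rfl, ?_, ?_⟩
    · rw [← rpow_mul_natCast hb]
      norm_num
      ring
    · rw [← rpow_mul_natCast hb]
      norm_num
  refine ⟨fun ξ hξ => ?_, 5 / 4 * (a / 4) ^ ((4 : ℝ) / 5), by positivity,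
    √(4 * π) * exp (1 / 16), by positivity, fun ξ hξ => ?_⟩
  · obtain ⟨u, hu, hu_def, hξu, hu4⟩ := hroot ξ hξ
    rw [hu_def, hu4, hξu, deriv_deriv_quartic_add_inv _ hu.ne',
      show 6 * u ^ 2 + 4 * u ^ 5 / u ^ 3 = 10 * u ^ 2 by field_simp; ring]
    exact integral_exp_neg_quartic_add_inv_le_laplace hu
  · obtain ⟨u, hu, -, hξu, hu4⟩ := hroot ξ hξ
    have hξ4 : (a / 4) ^ ((4 : ℝ) / 5) * ξ ^ ((4 : ℝ) / 5) = u ^ 4 := by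
      rw [← mul_rpow (by positivity) hξ.le, ← hu4, div_mul_eq_mul_div]
    rw [hξu, show -(5 / 4 * (a / 4) ^ ((4 : ℝ) / 5)) * ξ ^ ((4 : ℝ) / 5) = -(5 / 4) * u ^ 4 by
      rw [← hξ4]; ring]
    exact integral_exp_neg_quartic_add_inv_le hu
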